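/- Let n ≥ 1 and k ≥ 0 be integers, let μ be a locally finite Borel (Radon) measure on ℝ^{n+k} with finite entropy λ(μ) < ∞, and let p ∈ ℝ^{n+k} be a point at which the n-dimensional density Θ = lim_{r→0⁺} μ(B̄_r(p)) / (ω_n rⁿ) exists, where B̄_r(p) is the closed ball of radius r centered at p and ω_n is the Lebesgue measure of the unit ball in ℝⁿ. Then lim_{t₀→0⁺} F_{p,t₀}(μ) = Θ; in particular λ(μ) ≥ Θ. -/

import Mathlib

/-!
By the layer-cake formula, the Gaussian at scale `t` is an average over levels `s ∈ (0, 1)`: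
`F_{p,t}(μ) = ∫₀¹ w(s) · μ(B̄_r(p)) / (ω_n rⁿ) ds` with `r = √(4t(-log s))` and
`w(s) = ω_n (-log s / π)^{n/2}`; the same formula applied to Lebesgue measure on `ℝⁿ` and the
Gaussian integral give `∫₀¹ w = 1`. As `t → 0⁺` every radius `r` tends to `0`, so the density
ratios tend to `Θ`. Finite entropy bounds them uniformly, since a single ball is dominated by one
`F_{p,t}(μ) ≤ λ(μ)`, and dominated convergence gives `F_{p,t}(μ) → Θ`; hence `Θ ≤ λ(μ)`.
-/

open MeasureTheory Metric Set ENNReal Filter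

/-- The Colding–Minicozzi F-functional of a locally finite Borel (Radon) measure `μ` on
`ℝ^{n+k}`: `F_{x₀,t₀}(μ) = (4πt₀)^{-n/2} ∫ e^{-‖x-x₀‖²/(4t₀)} dμ(x)`. -/
noncomputable def Fmeas (n k : ℕ) (μ : Measure (EuclideanSpace ℝ (Fin (n + k))))
    (x₀ : EuclideanSpace ℝ (Fin (n + k))) (t₀ : ℝ) : ℝ≥0∞ :=
  ENNReal.ofReal ((4 * Real.pi * t₀) ^ (-(n : ℝ) / 2)) *
    ∫⁻ x, ENNReal.ofReal (Real.exp (-‖x - x₀‖ ^ 2 / (4 * t₀))) ∂μ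

/-- The Colding–Minicozzi entropy of a measure: `λ(μ) = sup_{x₀, t₀ > 0} F_{x₀,t₀}(μ)`. -/
noncomputable def entropyMeas (n k : ℕ) (μ : Measure (EuclideanSpace ℝ (Fin (n + k)))) : ℝ≥0∞ :=
  ⨆ (x₀ : EuclideanSpace ℝ (Fin (n + k))) (t₀ : ℝ) (_ : 0 < t₀), Fmeas n k μ x₀ t₀

open Topology

section LayerCake

variable {E : Type*} [NormedAddCommGroup E]

lemma setOf_le_exp_neg_sq_norm_sub_div (p : E) {a s : ℝ} (ha : 0 < a) (hs : s ∈ Ioo (0 : ℝ) 1) :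
    {x : E | s ≤ Real.exp (-‖x - p‖ ^ 2 / a)} = closedBall p √(a * -Real.log s) := by
  have hlog : 0 < -Real.log s := neg_pos.2 (Real.log_neg hs.1 hs.2)
  ext x
  rw [mem_ofPred_eq, mem_closedBall, dist_eq_norm, ← Real.log_le_iff_le_exp hs.1,
    Real.le_sqrt (norm_nonneg _) (by positivity), neg_div, le_neg, div_le_iff₀ ha, mul_comm]

variable [MeasurableSpace E] [BorelSpace E]

lemma lintegral_exp_neg_sq_norm_sub_div (μ : Measure E) (p : E) {a : ℝ} (ha : 0 < a) :
    ∫⁻ x, ENNReal.ofReal (Real.exp (-‖x - p‖ ^ 2 / a)) ∂μ =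
      ∫⁻ s in Ioo (0 : ℝ) 1, μ (closedBall p √(a * -Real.log s)) := by
  have hempty : ∀ s ∈ Ioi (1 : ℝ), {x : E | s ≤ Real.exp (-‖x - p‖ ^ 2 / a)} = ∅ :=
    fun s hs ↦ eq_empty_of_forall_notMem fun x hx ↦ (hs.trans_le (hx.trans
      (Real.exp_le_one_iff.2 (div_nonpos_of_nonpos_of_nonneg (neg_nonpos.2 (sq_nonneg _))
        ha.le)))).false
  rw [lintegral_eq_lintegral_meas_le μ (ae_of_all _ fun x ↦ (Real.exp_pos _).le)
      (by fun_prop), ← Ioc_union_Ioi_eq_Ioi zero_le_one,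
    lintegral_union measurableSet_Ioi (Ioc_disjoint_Ioi le_rfl),
    setLIntegral_eq_zero measurableSet_Ioi fun s hs ↦ by simp [hempty s hs], add_zero,
    setLIntegral_congr Ioo_ae_eq_Ioc.symm]
  exact setLIntegral_congr_fun measurableSet_Ioo fun s hs ↦ by
    rw [setOf_le_exp_neg_sq_norm_sub_div p ha hs]

lemma ofReal_mul_measure_closedBall_le_lintegral_exp (μ : Measure E) (p : E) {a s : ℝ}
    (ha : 0 < a) (hs : s ∈ Ioo (0 : ℝ) 1) :
    ENNReal.ofReal s * μ (closedBall p √(a * -Real.log s)) ≤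
      ∫⁻ x, ENNReal.ofReal (Real.exp (-‖x - p‖ ^ 2 / a)) ∂μ := by
  have hset : {x : E | ENNReal.ofReal s ≤ ENNReal.ofReal (Real.exp (-‖x - p‖ ^ 2 / a))} =
      closedBall p √(a * -Real.log s) := by
    simp_rw [ENNReal.ofReal_le_ofReal_iff (Real.exp_pos _).le]
    exact setOf_le_exp_neg_sq_norm_sub_div p ha hs
  rw [← hset]
  exact mul_meas_ge_le_lintegral₀ (by fun_prop) _

end LayerCake

lemma lintegral_exp_neg_sq_norm (m : ℕ) :
    ∫⁻ x : EuclideanSpace ℝ (Fin m), ENNReal.ofReal (Real.exp (-‖x‖ ^ 2)) =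
      ENNReal.ofReal (Real.pi ^ ((m : ℝ) / 2)) := by
  have h := GaussianFourier.integral_rexp_neg_mul_sq_norm
    (V := EuclideanSpace ℝ (Fin m)) one_pos
  simp only [neg_mul, one_mul, div_one, finrank_euclideanSpace_fin] at h
  rw [← ofReal_integral_eq_lintegral_ofReal
    (.of_integral_ne_zero (h ▸ (Real.rpow_pos_of_pos Real.pi_pos _).ne'))
    (ae_of_all _ fun x ↦ (Real.exp_pos _).le), h]

lemma volume_ball_mul_lintegral_neg_log_rpow (m : ℕ) :
    volume (ball (0 : EuclideanSpace ℝ (Fin m)) 1) *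
        ∫⁻ s in Ioo (0 : ℝ) 1, ENNReal.ofReal ((-Real.log s) ^ ((m : ℝ) / 2)) =
      ENNReal.ofReal (Real.pi ^ ((m : ℝ) / 2)) := by
  have hball : ∀ s ∈ Ioo (0 : ℝ) 1,
      volume (closedBall (0 : EuclideanSpace ℝ (Fin m)) √(-Real.log s)) =
        ENNReal.ofReal ((-Real.log s) ^ ((m : ℝ) / 2)) *
          volume (ball (0 : EuclideanSpace ℝ (Fin m)) 1) := fun s hs ↦ by
    rw [Measure.addHaar_closedBall _ _ (Real.sqrt_nonneg _), finrank_euclideanSpace_fin,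
      ← Real.rpow_natCast, ← Real.rpow_div_two_eq_sqrt _
        (neg_nonneg.2 (Real.log_nonpos hs.1.le hs.2.le))]
  have h := lintegral_exp_neg_sq_norm_sub_div (volume : Measure (EuclideanSpace ℝ (Fin m))) 0
    one_pos
  simp only [sub_zero, div_one, one_mul] at h
  rw [lintegral_exp_neg_sq_norm, setLIntegral_congr_fun measurableSet_Ioo hball,
    lintegral_mul_const' _ _ measure_ball_lt_top.ne] at h
  rw [mul_comm, h]

noncomputable def gaussWeight (n : ℕ) (s : ℝ) : ℝ≥0∞ :=
  volume (ball (0 : EuclideanSpace ℝ (Fin n)) 1) *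
    ENNReal.ofReal ((-Real.log s / Real.pi) ^ ((n : ℝ) / 2))

lemma measurable_gaussWeight (n : ℕ) : Measurable (gaussWeight n) := by
  unfold gaussWeight
  fun_prop

lemma gaussWeight_ne_top (n : ℕ) (s : ℝ) : gaussWeight n s ≠ ⊤ :=
  mul_ne_top measure_ball_lt_top.ne ofReal_ne_top

lemma gaussWeight_ne_zero (n : ℕ) {s : ℝ} (hs : s ∈ Ioo (0 : ℝ) 1) : gaussWeight n s ≠ 0 :=
  mul_ne_zero (measure_ball_pos _ _ one_pos).ne' (ofReal_pos.2 (Real.rpow_pos_of_pos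
    (div_pos (neg_pos.2 (Real.log_neg hs.1 hs.2)) Real.pi_pos) _)).ne'

lemma setLIntegral_gaussWeight (n : ℕ) : ∫⁻ s in Ioo (0 : ℝ) 1, gaussWeight n s = 1 := by
  have hsplit : ∀ s ∈ Ioo (0 : ℝ) 1, gaussWeight n s =
      volume (ball (0 : EuclideanSpace ℝ (Fin n)) 1) *
        ENNReal.ofReal ((Real.pi ^ ((n : ℝ) / 2))⁻¹) *
          ENNReal.ofReal ((-Real.log s) ^ ((n : ℝ) / 2)) := fun s hs ↦ by
    have hlog : 0 ≤ -Real.log s := neg_nonneg.2 (Real.log_nonpos hs.1.le hs.2.le)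
    rw [gaussWeight, Real.div_rpow hlog Real.pi_pos.le, div_eq_mul_inv,
      ENNReal.ofReal_mul (Real.rpow_nonneg hlog _)]
    ring
  rw [setLIntegral_congr_fun measurableSet_Ioo hsplit,
    lintegral_const_mul' _ _ (mul_ne_top measure_ball_lt_top.ne ofReal_ne_top), mul_right_comm,
    volume_ball_mul_lintegral_neg_log_rpow, ← ENNReal.ofReal_mul (by positivity),
    mul_inv_cancel₀ (Real.rpow_pos_of_pos Real.pi_pos _).ne', ENNReal.ofReal_one]

lemma tendsto_setLIntegral_gaussWeight_mul (n : ℕ) {D : ℝ → ℝ≥0∞} (hD : Measurable D)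
    {C Θ : ℝ≥0∞} (hC : C ≠ ⊤) (hDC : ∀ r > 0, D r ≤ C) (hDΘ : Tendsto D (𝓝[>] 0) (𝓝 Θ)) :
    Tendsto (fun t ↦ ∫⁻ s in Ioo (0 : ℝ) 1, gaussWeight n s * D √(4 * t * -Real.log s))
      (𝓝[>] 0) (𝓝 Θ) := by
  have hradius : ∀ s ∈ Ioo (0 : ℝ) 1,
      Tendsto (fun t ↦ √(4 * t * -Real.log s)) (𝓝[>] 0) (𝓝[>] 0) := fun s hs ↦ by
    have hlog : 0 < -Real.log s := neg_pos.2 (Real.log_neg hs.1 hs.2)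
    refine tendsto_nhdsWithin_iff.2 ⟨?_, ?_⟩
    · have h := ((by fun_prop : Continuous fun t ↦ √(4 * t * -Real.log s)).tendsto 0)
      simp only [mul_zero, zero_mul, Real.sqrt_zero] at h
      exact h.mono_left nhdsWithin_le_nhds
    · filter_upwards [self_mem_nhdsWithin] with t (ht : 0 < t)
      exact Real.sqrt_pos.2 (by positivity)
  have hbound : ∀ t > 0, ∀ s ∈ Ioo (0 : ℝ) 1,
      gaussWeight n s * D √(4 * t * -Real.log s) ≤ gaussWeight n s * C := fun t ht s hs ↦
    mul_le_mul_right (hDC _ (Real.sqrt_pos.2 (mul_pos (by positivity)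
      (neg_pos.2 (Real.log_neg hs.1 hs.2))))) _
  have hmass : ∀ c, ∫⁻ s in Ioo (0 : ℝ) 1, gaussWeight n s * c = c := fun c ↦ by
    rw [lintegral_mul_const _ (measurable_gaussWeight n), setLIntegral_gaussWeight, one_mul]
  have h := tendsto_lintegral_filter_of_dominated_convergence (l := 𝓝[>] 0)
    (fun s ↦ gaussWeight n s * C)
    (Eventually.of_forall fun t ↦ (measurable_gaussWeight n).mul (hD.comp (by fun_prop)))
    (eventually_mem_nhdsWithin.mono fun t ht ↦
      (ae_restrict_iff' measurableSet_Ioo).2 (ae_of_all _ (hbound t ht)))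
    ((hmass C).trans_ne hC)
    ((ae_restrict_iff' measurableSet_Ioo).2 (ae_of_all _ fun s hs ↦
      ENNReal.Tendsto.const_mul (hDΘ.comp (hradius s hs)) (Or.inr (gaussWeight_ne_top n s))))
  rwa [hmass] at h

noncomputable def densityRatio {E : Type*} [PseudoMetricSpace E] [MeasurableSpace E] (n : ℕ)
    (μ : Measure E) (p : E) (r : ℝ) : ℝ≥0∞ :=
  μ (closedBall p r) / (volume (ball (0 : EuclideanSpace ℝ (Fin n)) 1) * ENNReal.ofReal (r ^ n))

section Density

variable {E : Type*} [PseudoMetricSpace E] [MeasurableSpace E] (n : ℕ) (μ : Measure E) (p : E)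

lemma measurable_densityRatio : Measurable (densityRatio n μ p) := by
  have hmono : Monotone fun r ↦ μ (closedBall p r) :=
    fun _ _ hrs ↦ measure_mono (closedBall_subset_closedBall hrs)
  exact hmono.measurable.div (by fun_prop)

lemma ofReal_rpow_mul_measure_closedBall_eq {t s : ℝ} (ht : 0 < t) (hs : s ∈ Ioo (0 : ℝ) 1) :
    ENNReal.ofReal ((4 * Real.pi * t) ^ (-(n : ℝ) / 2)) *
        μ (closedBall p √(4 * t * -Real.log s)) =
      gaussWeight n s * densityRatio n μ p √(4 * t * -Real.log s) := by
  have hlog : 0 < -Real.log s := neg_pos.2 (Real.log_neg hs.1 hs.2)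
  set r := √(4 * t * -Real.log s)
  have hr : 0 < r := Real.sqrt_pos.2 (by positivity)
  have hscale : (-Real.log s / Real.pi) ^ ((n : ℝ) / 2) =
      (4 * Real.pi * t) ^ (-(n : ℝ) / 2) * r ^ n := by
    rw [← Real.rpow_natCast, ← Real.rpow_div_two_eq_sqrt _ (by positivity), neg_div (2 : ℝ),
      Real.rpow_neg (by positivity), inv_mul_eq_div, ← Real.div_rpow (by positivity)
        (by positivity)]
    congr 1
    field_simp
  have hvol : volume (ball (0 : EuclideanSpace ℝ (Fin n)) 1) * ENNReal.ofReal (r ^ n) ≠ 0 :=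
    mul_ne_zero (measure_ball_pos _ _ one_pos).ne' (ofReal_pos.2 (by positivity)).ne'
  rw [gaussWeight, densityRatio, hscale, ENNReal.ofReal_mul (by positivity), mul_left_comm,
    mul_assoc (ENNReal.ofReal _),
    ENNReal.mul_div_cancel hvol (mul_ne_top measure_ball_lt_top.ne ofReal_ne_top)]

end Density

section Entropy

variable (n k : ℕ) (μ : Measure (EuclideanSpace ℝ (Fin (n + k))))
  (p : EuclideanSpace ℝ (Fin (n + k)))

lemma Fmeas_le_entropyMeas {t : ℝ} (ht : 0 < t) : Fmeas n k μ p t ≤ entropyMeas n k μ :=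
  le_iSup_of_le p (le_iSup_of_le t (le_iSup_of_le ht le_rfl))

lemma Fmeas_eq_setLIntegral_gaussWeight_mul_densityRatio {t : ℝ} (ht : 0 < t) :
    Fmeas n k μ p t =
      ∫⁻ s in Ioo (0 : ℝ) 1, gaussWeight n s * densityRatio n μ p √(4 * t * -Real.log s) := by
  rw [Fmeas, lintegral_exp_neg_sq_norm_sub_div μ p (by positivity),
    ← lintegral_const_mul' _ _ ofReal_ne_top]
  exact setLIntegral_congr_fun measurableSet_Ioo fun s hs ↦
    ofReal_rpow_mul_measure_closedBall_eq n μ p ht hs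

lemma ofReal_mul_gaussWeight_mul_densityRatio_le_entropyMeas {t s : ℝ} (ht : 0 < t)
    (hs : s ∈ Ioo (0 : ℝ) 1) :
    ENNReal.ofReal s * (gaussWeight n s * densityRatio n μ p √(4 * t * -Real.log s)) ≤
      entropyMeas n k μ := by
  rw [← ofReal_rpow_mul_measure_closedBall_eq n μ p ht hs, mul_left_comm]
  calc _ ≤ ENNReal.ofReal ((4 * Real.pi * t) ^ (-(n : ℝ) / 2)) *
        ∫⁻ x, ENNReal.ofReal (Real.exp (-‖x - p‖ ^ 2 / (4 * t))) ∂μ :=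
        mul_le_mul_right (ofReal_mul_measure_closedBall_le_lintegral_exp μ p (by positivity) hs) _
    _ ≤ entropyMeas n k μ := Fmeas_le_entropyMeas n k μ p ht

lemma exists_densityRatio_le (hfin : entropyMeas n k μ ≠ ⊤) :
    ∃ C ≠ ⊤, ∀ r > 0, densityRatio n μ p r ≤ C := by
  -- the level `s₀ = e⁻¹` at time `t = r² / 4` has radius exactly `r`
  set s₀ := Real.exp (-1)
  have hs₀ : s₀ ∈ Ioo (0 : ℝ) 1 := ⟨Real.exp_pos _, Real.exp_lt_one_iff.2 (by norm_num)⟩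
  have hc : ENNReal.ofReal s₀ * gaussWeight n s₀ ≠ 0 :=
    mul_ne_zero (ofReal_pos.2 hs₀.1).ne' (gaussWeight_ne_zero n hs₀)
  refine ⟨entropyMeas n k μ / (ENNReal.ofReal s₀ * gaussWeight n s₀),
    ENNReal.div_ne_top hfin hc, fun r hr ↦ ?_⟩
  have hradius : √(4 * (r ^ 2 / 4) * -Real.log s₀) = r := by
    rw [Real.log_exp, neg_neg, mul_one, mul_div_cancel₀ _ four_ne_zero, Real.sqrt_sq hr.le]
  have h := ofReal_mul_gaussWeight_mul_densityRatio_le_entropyMeas n k μ p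
    (by positivity : 0 < r ^ 2 / 4) hs₀
  rw [hradius, ← mul_assoc] at h
  rw [ENNReal.le_div_iff_mul_le (Or.inl hc) (Or.inl (mul_ne_top ofReal_ne_top
    (gaussWeight_ne_top n s₀))), mul_comm]
  exact h

end Entropy

theorem F_functional_tendsto_density_general (n k : ℕ)
    (μ : Measure (EuclideanSpace ℝ (Fin (n + k))))
    (hfin : entropyMeas n k μ < ⊤)
    (p : EuclideanSpace ℝ (Fin (n + k))) (Θ : ℝ≥0∞)
    (hΘ : Tendsto
      (fun r : ℝ => μ (Metric.closedBall p r) /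
        (MeasureTheory.volume (Metric.ball (0 : EuclideanSpace ℝ (Fin n)) 1) *
          ENNReal.ofReal (r ^ n)))
      (nhdsWithin 0 (Set.Ioi 0)) (nhds Θ)) :
    Tendsto (fun t₀ : ℝ => Fmeas n k μ p t₀) (nhdsWithin 0 (Set.Ioi 0)) (nhds Θ) ∧
      Θ ≤ entropyMeas n k μ := by
  obtain ⟨C, hC, hDC⟩ := exists_densityRatio_le n k μ p hfin.ne
  have hF : Tendsto (fun t₀ : ℝ => Fmeas n k μ p t₀) (𝓝[>] 0) (𝓝 Θ) :=
    (tendsto_setLIntegral_gaussWeight_mul n (measurable_densityRatio n μ p) hC hDC hΘ).congr'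
      (eventually_mem_nhdsWithin.mono fun t ht ↦
        (Fmeas_eq_setLIntegral_gaussWeight_mul_densityRatio n k μ p ht).symm)
  exact ⟨hF, le_of_tendsto hF (eventually_mem_nhdsWithin.mono fun t ht ↦
    Fmeas_le_entropyMeas n k μ p ht)⟩

/-- If `μ` is a locally finite Borel measure on `ℝ^{n+k}` with finite entropy and the
`n`-dimensional density `Θ = lim_{r→0⁺} μ(B̄_r(p))/(ω_n rⁿ)` exists at a point `p`
(where `ω_n` is the Lebesgue measure of the unit ball in `ℝⁿ`), then
`F_{p,t₀}(μ) → Θ` as `t₀ → 0⁺`; in particular `λ(μ) ≥ Θ`. -/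
theorem F_functional_tendsto_density (n k : ℕ) (hn : 1 ≤ n)
    (μ : Measure (EuclideanSpace ℝ (Fin (n + k)))) [IsLocallyFiniteMeasure μ]
    (hfin : entropyMeas n k μ < ⊤)
    (p : EuclideanSpace ℝ (Fin (n + k))) (Θ : ℝ≥0∞)
    (hΘ : Tendsto
      (fun r : ℝ => μ (Metric.closedBall p r) /
        (MeasureTheory.volume (Metric.ball (0 : EuclideanSpace ℝ (Fin n)) 1) *
          ENNReal.ofReal (r ^ n)))
      (nhdsWithin 0 (Set.Ioi 0)) (nhds Θ)) :
    Tendsto (fun t₀ : ℝ => Fmeas n k μ p t₀) (nhdsWithin 0 (Set.Ioi 0)) (nhds Θ) ∧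
      Θ ≤ entropyMeas n k μ :=
  F_functional_tendsto_density_general n k μ hfin p Θ hΘ
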